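/- arXiv:2604.25295 — 7 statements merged into one kernel-verified Lean document; each statement's English description precedes it below -/
import Mathlib

section
/- Let d ≥ 1, let B be a d×d real matrix with zero diagonal (B i i = 0 for all i), let σ > 0, and set I := σ⁻²·(1 − B)ᵀ·(1 − B), where 1 denotes the d×d identity matrix. Then for every index i one has I i i = σ⁻²·(1 + Σ_k (B k i)²); consequently I i i ≥ σ⁻² for all i, with equality I i i = σ⁻² if and only if the i-th column of B is zero (B k i = 0 for all k), i.e., node i is a sink (leaf) of the structural model x = B x + ε. -/
open Matrix Finset

/-- **Leaf Node Identifiability (linear Gaussian SJIM, diagonal formula).**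
For a linear ANM `x = B x + ε` with zero-diagonal adjacency matrix `B` and noise
variance `σ²`, the SJIM `I = σ⁻² (1 - B)ᵀ (1 - B)` has diagonal entries
`I i i = σ⁻² (1 + ∑ₖ (B k i)²)`; hence `I i i ≥ σ⁻²` for all `i`, with equality
iff the `i`-th column of `B` vanishes, i.e. `i` is a sink (leaf). -/
theorem sjim_diag_leaf_identifiability
    {d : ℕ} (hd : 1 ≤ d) (B : Matrix (Fin d) (Fin d) ℝ)
    (hdiag : ∀ i, B i i = 0) (σ : ℝ) (hσ : 0 < σ)
    (I : Matrix (Fin d) (Fin d) ℝ)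
    (hI : I = (σ ^ 2)⁻¹ • ((1 - B)ᵀ * (1 - B))) :
    (∀ i, I i i = (σ ^ 2)⁻¹ * (1 + ∑ k, (B k i) ^ 2)) ∧
    (∀ i, (σ ^ 2)⁻¹ ≤ I i i) ∧
    (∀ i, I i i = (σ ^ 2)⁻¹ ↔ ∀ k, B k i = 0) := by
  have hσ2 : (0:ℝ) < (σ ^ 2)⁻¹ := by positivity
  have hdi : ∀ i, I i i = (σ ^ 2)⁻¹ * (1 + ∑ k, (B k i) ^ 2) := by
    intro i
    have : ∑ k, ((1 - B) k i) * ((1 - B) k i)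
        = 1 + ∑ k, (B k i) ^ 2 := by
      have : ∀ k, ((1 - B) k i) * ((1 - B) k i)
          = (if k = i then (1:ℝ) else 0) - 2 * (if k = i then (1:ℝ) else 0) * B k i
            + (B k i) ^ 2 := by
        intro k
        simp only [Matrix.sub_apply, Matrix.one_apply]
        by_cases h : k = i <;> simp [h] <;> ring
      rw [Finset.sum_congr rfl (fun k _ => this k)]
      rw [Finset.sum_add_distrib, Finset.sum_sub_distrib]
      simp [Finset.sum_ite_eq', hdiag i]
    simp only [hI, Matrix.smul_apply, Matrix.mul_apply, Matrix.transpose_apply, smul_eq_mul]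
    rw [this]
  refine ⟨hdi, ?_, ?_⟩
  · intro i
    rw [hdi i]
    have hs : (0:ℝ) ≤ ∑ k, (B k i) ^ 2 := Finset.sum_nonneg fun k _ => sq_nonneg _
    nlinarith
  · intro i
    rw [hdi i]
    constructor
    · intro h k
      have hs : ∑ j, (B j i) ^ 2 = 0 := by
        have := h
        field_simp at this
        linarith
      have := (Finset.sum_eq_zero_iff_of_nonneg (fun j _ => sq_nonneg (B j i))).mp hs k (Finset.mem_univ k)
      exact pow_eq_zero_iff (n := 2) (by norm_num) |>.mp this
    · intro h
      simp [h]
end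

section
/- Fix d ≥ 1 and σ > 0, and for each k let f_k : (Fin d → ℝ) → ℝ be twice continuously differentiable with f_k not depending on its own coordinate (f_k(v) = f_k(w) whenever v_j = w_j for all j ≠ k). Define L(v) = −Σ_k (v_k − f_k(v))²/(2σ²) − (d/2)·log(2πσ²). Then for every v and every index i, the second partial derivative of L in the i-th coordinate satisfies ∂²L/∂v_i²(v) = −1/σ² − σ⁻²·Σ_{k ≠ i} (∂_i f_k(v))² + σ⁻²·Σ_{k ≠ i} (v_k − f_k(v))·∂²_{ii} f_k(v), where ∂_i denotes the partial derivative in the i-th coordinate and ∂²_{ii} the second partial derivative in the i-th coordinate. -/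
open Finset Real

/-- Partial derivative of `F : (Fin d → ℝ) → ℝ` in the `i`-th coordinate. -/
noncomputable def pdv {d : ℕ} (i : Fin d) (F : (Fin d → ℝ) → ℝ) (v : Fin d → ℝ) : ℝ :=
  deriv (fun t : ℝ => F (Function.update v i t)) (v i)

private lemma contDiff_updateLine {d : ℕ} (v : Fin d → ℝ) (i : Fin d) :
    ContDiff ℝ 2 (fun t : ℝ => Function.update v i t) := by
  rw [contDiff_pi]
  intro j
  by_cases h : j = i
  · subst h
    simp only [Function.update_self]
    exact contDiff_id
  · simp only [Function.update_of_ne h]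
    exact contDiff_const

private lemma pdv_update {d : ℕ} (i : Fin d) (F : (Fin d → ℝ) → ℝ) (v : Fin d → ℝ) (t : ℝ) :
    pdv i F (Function.update v i t) = deriv (fun s : ℝ => F (Function.update v i s)) t := by
  simp [pdv, Function.update_idem]

/-- **Hessian diagonal of the ANM log-density (pointwise form).**
For `L(v) = −∑ₖ (vₖ − fₖ(v))²/(2σ²) − (d/2)·log (2πσ²)` with each `fₖ` twice
continuously differentiable and not depending on its own coordinate,
`∂²L/∂vᵢ²(v) = −1/σ² − σ⁻² ∑_{k≠i} (∂ᵢfₖ(v))² + σ⁻² ∑_{k≠i} (vₖ − fₖ(v))·∂²ᵢᵢfₖ(v)`. -/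
theorem anm_logdensity_hessian_diag
    {d : ℕ} (hd : 1 ≤ d) (σ : ℝ) (hσ : 0 < σ)
    (f : Fin d → (Fin d → ℝ) → ℝ)
    (hf : ∀ k, ContDiff ℝ 2 (f k))
    (hself : ∀ k (v w : Fin d → ℝ), (∀ j, j ≠ k → v j = w j) → f k v = f k w)
    (L : (Fin d → ℝ) → ℝ)
    (hL : L = fun v => (-∑ k, (v k - f k v) ^ 2 / (2 * σ ^ 2))
        - (d : ℝ) / 2 * Real.log (2 * Real.pi * σ ^ 2)) :
    ∀ (v : Fin d → ℝ) (i : Fin d),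
      pdv i (pdv i L) v
        = -1 / σ ^ 2
          - (σ ^ 2)⁻¹ * ∑ k ∈ Finset.univ.erase i, (pdv i (f k) v) ^ 2
          + (σ ^ 2)⁻¹ * ∑ k ∈ Finset.univ.erase i,
              (v k - f k v) * pdv i (pdv i (f k)) v := by
  subst hL
  intro v i
  have hσ2 : (σ : ℝ) ^ 2 ≠ 0 := pow_ne_zero 2 (ne_of_gt hσ)
  have hgC2 : ∀ k : Fin d, ContDiff ℝ 2 (fun t : ℝ => f k (Function.update v i t)) :=
    fun k => (hf k).comp (contDiff_updateLine v i)
  have hg1 : ∀ (k : Fin d) (t : ℝ),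
      HasDerivAt (fun s : ℝ => f k (Function.update v i s))
        (deriv (fun s : ℝ => f k (Function.update v i s)) t) t := fun k t =>
    (((hgC2 k).differentiable (by norm_num)) t).hasDerivAt
  have hg2 : ∀ (k : Fin d) (t : ℝ),
      HasDerivAt (deriv (fun s : ℝ => f k (Function.update v i s)))
        (deriv (deriv (fun s : ℝ => f k (Function.update v i s))) t) t := by
    intro k t
    have h2 : ContDiff ℝ ((1 : WithTop ℕ∞) + 1) (fun s : ℝ => f k (Function.update v i s)) := by
      have := hgC2 k
      norm_num at this ⊢
      exact this
    have hder := (contDiff_succ_iff_deriv.mp h2).2.2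
    exact ((hder.differentiable (by norm_num)) t).hasDerivAt
  have hconst : (fun t : ℝ => f i (Function.update v i t)) = fun _ : ℝ => f i v :=
    funext fun t => hself i _ v fun j hj => Function.update_of_ne hj _ _
  have hcoord : ∀ (k : Fin d) (t : ℝ),
      HasDerivAt (fun s : ℝ => Function.update v i s k)
        (if k = i then (1 : ℝ) else 0) t := by
    intro k t
    by_cases h : k = i
    · subst h
      simp only [Function.update_self, ↓reduceIte]
      exact hasDerivAt_id t
    · simp only [Function.update_of_ne h, if_neg h]
      exact hasDerivAt_const t (v k)
  have hterm : ∀ (k : Fin d) (t : ℝ),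
      HasDerivAt (fun s : ℝ =>
          (Function.update v i s k - f k (Function.update v i s)) ^ 2 / (2 * σ ^ 2))
        ((Function.update v i t k - f k (Function.update v i t)) *
          ((if k = i then (1 : ℝ) else 0) - deriv (fun s : ℝ => f k (Function.update v i s)) t)
            / σ ^ 2) t := by
    intro k t
    have h := (((hcoord k t).fun_sub (hg1 k t)).fun_pow 2).div_const (2 * σ ^ 2)
    refine h.congr_deriv ?_
    field_simp
    ring
  have hF : ∀ t : ℝ,
      HasDerivAt (fun s : ℝ =>
          (-∑ k, (Function.update v i s k - f k (Function.update v i s)) ^ 2 / (2 * σ ^ 2))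
            - (d : ℝ) / 2 * Real.log (2 * Real.pi * σ ^ 2))
        (-∑ k, (Function.update v i t k - f k (Function.update v i t)) *
          ((if k = i then (1 : ℝ) else 0) - deriv (fun s : ℝ => f k (Function.update v i s)) t)
            / σ ^ 2) t := by
    intro t
    exact ((HasDerivAt.fun_sum fun k _ => hterm k t).neg).sub_const _
  have hpdvL : ∀ t : ℝ,
      pdv i (fun v => (-∑ k, (v k - f k v) ^ 2 / (2 * σ ^ 2))
          - (d : ℝ) / 2 * Real.log (2 * Real.pi * σ ^ 2)) (Function.update v i t)
        = -∑ k, (Function.update v i t k - f k (Function.update v i t)) *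
            ((if k = i then (1 : ℝ) else 0)
              - deriv (fun s : ℝ => f k (Function.update v i s)) t) / σ ^ 2 := by
    intro t
    rw [pdv_update]
    exact (hF t).deriv
  have hpp : ∀ k : Fin d, pdv i (pdv i (f k)) v
      = deriv (deriv (fun s : ℝ => f k (Function.update v i s))) (v i) := by
    intro k
    have h : (fun t : ℝ => pdv i (f k) (Function.update v i t))
        = deriv (fun s : ℝ => f k (Function.update v i s)) :=
      funext fun t => pdv_update i (f k) v t
    show deriv (fun t : ℝ => pdv i (f k) (Function.update v i t)) (v i) = _
    rw [h]
  have hp : ∀ k : Fin d, pdv i (f k) v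
      = deriv (fun s : ℝ => f k (Function.update v i s)) (v i) := fun k => rfl
  have hpi : pdv i (f i) v = 0 := by
    rw [hp i, hconst]
    simp
  have hppi : pdv i (pdv i (f i)) v = 0 := by
    rw [hpp i, hconst]
    simp
  have hG : HasDerivAt (fun t : ℝ =>
        -∑ k, (Function.update v i t k - f k (Function.update v i t)) *
          ((if k = i then (1 : ℝ) else 0) - deriv (fun s : ℝ => f k (Function.update v i s)) t)
            / σ ^ 2)
      (-∑ k, (((if k = i then (1 : ℝ) else 0)
            - deriv (fun s : ℝ => f k (Function.update v i s)) (v i)) ^ 2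
          - (Function.update v i (v i) k - f k (Function.update v i (v i))) *
              deriv (deriv (fun s : ℝ => f k (Function.update v i s))) (v i)) / σ ^ 2)
      (v i) := by
    refine HasDerivAt.neg (HasDerivAt.fun_sum fun k _ => ?_)
    have h1 := (hcoord k (v i)).fun_sub (hg1 k (v i))
    have h2 := (hasDerivAt_const (v i) (if k = i then (1 : ℝ) else 0)).fun_sub (hg2 k (v i))
    have h := (h1.fun_mul h2).div_const (σ ^ 2)
    refine h.congr_deriv ?_
    ring
  have hmain : pdv i (pdv i (fun v => (-∑ k, (v k - f k v) ^ 2 / (2 * σ ^ 2))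
          - (d : ℝ) / 2 * Real.log (2 * Real.pi * σ ^ 2))) v
      = -∑ k, (((if k = i then (1 : ℝ) else 0) - pdv i (f k) v) ^ 2
          - (v k - f k v) * pdv i (pdv i (f k)) v) / σ ^ 2 := by
    show deriv (fun t : ℝ => pdv i _ (Function.update v i t)) (v i) = _
    rw [funext hpdvL, hG.deriv]
    simp only [Function.update_eq_self]
    congr 1
    refine Finset.sum_congr rfl fun k _ => ?_
    rw [hp k, hpp k]
  rw [hmain, ← Finset.add_sum_erase Finset.univ _ (Finset.mem_univ i)]
  rw [if_pos rfl, hpi, hppi]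
  have hrest : ∀ k ∈ Finset.univ.erase i,
      (((if k = i then (1 : ℝ) else 0) - pdv i (f k) v) ^ 2
          - (v k - f k v) * pdv i (pdv i (f k)) v) / σ ^ 2
        = (σ ^ 2)⁻¹ * (pdv i (f k) v) ^ 2
          - (σ ^ 2)⁻¹ * ((v k - f k v) * pdv i (pdv i (f k)) v) := by
    intro k hk
    rw [if_neg (Finset.mem_erase.mp hk).1]
    field_simp
    ring
  rw [Finset.sum_congr rfl hrest, Finset.sum_sub_distrib, ← Finset.mul_sum, ← Finset.mul_sum]
  field_simp
  ring
end

section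
/- Fix d ≥ 1, σ > 0, and a probability space (Ω, P) carrying independent random variables ε_0, …, ε_{d−1} : Ω → ℝ, each Gaussian with mean 0 and variance σ². For each k let f_k : (Fin d → ℝ) → ℝ be twice continuously differentiable and depend only on coordinates j < k (f_k(v) = f_k(w) whenever v_j = w_j for all j < k). Define the random vector x : Ω → (Fin d → ℝ) recursively by x_k = f_k(x) + ε_k, and define L(v) = −Σ_k (v_k − f_k(v))²/(2σ²) − (d/2)·log(2πσ²). Assume for every index i and every k ≠ i that the random variables (∂_i f_k(x))² and ∂²_{ii} f_k(x) are integrable. Then for every i, E[−∂²L/∂v_i²(x)] = 1/σ² + σ⁻²·Σ_{k ≠ i} E[(∂_i f_k(x))²]. If in addition E[(∂_i f_k(x))²] > 0 whenever f_k depends non-trivially on coordinate i (causal faithfulness), then an index l attains E[−∂²L/∂v_l²(x)] = 1/σ² = min_i E[−∂²L/∂v_i²(x)] if and only if no f_k depends on coordinate l, i.e., l is a topological sink (leaf node). -/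
open Finset Real MeasureTheory ProbabilityTheory
open scoped NNReal ENNReal

/-- `F` depends non-trivially on coordinate `i`. -/
def DependsOnCoord {d : ℕ} (F : (Fin d → ℝ) → ℝ) (i : Fin d) : Prop :=
  ∃ v w : Fin d → ℝ, (∀ j, j ≠ i → v j = w j) ∧ F v ≠ F w



namespace LeafAux

variable {d : ℕ}

lemma update_eq_add (v : Fin d → ℝ) (i : Fin d) :
    (fun t : ℝ => Function.update v i t)
      = fun t => Function.update v i 0 + t • Pi.single i 1 := by
  funext t; funext j
  by_cases h : j = i
  · subst h; simp
  · simp [Function.update_of_ne h, Pi.single_eq_of_ne h]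

lemma contDiff_update (v : Fin d → ℝ) (i : Fin d) {n : WithTop ℕ∞} :
    ContDiff ℝ n (fun t : ℝ => Function.update v i t) := by
  rw [update_eq_add]
  exact contDiff_const.add (contDiff_id.smul contDiff_const)

lemma hasDerivAt_update (v : Fin d → ℝ) (i : Fin d) (s : ℝ) :
    HasDerivAt (fun t : ℝ => Function.update v i t) (Pi.single i 1) s := by
  rw [update_eq_add]
  simpa using ((hasDerivAt_id s).smul_const (Pi.single i 1 : Fin d → ℝ)).const_add
    (Function.update v i 0)

lemma curve_pdv (F : (Fin d → ℝ) → ℝ) (v : Fin d → ℝ) (i : Fin d) (s : ℝ) :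
    pdv i F (Function.update v i s) = deriv (fun t => F (Function.update v i t)) s := by
  simp only [pdv, Function.update_idem, Function.update_self]

lemma pdv_eq_fderiv {F : (Fin d → ℝ) → ℝ} (hF : Differentiable ℝ F) (i : Fin d)
    (v : Fin d → ℝ) : pdv i F v = fderiv ℝ F v (Pi.single i 1) := by
  have h1 : HasDerivAt (fun t : ℝ => F (Function.update v i t))
      (fderiv ℝ F (Function.update v i (v i)) (Pi.single i 1)) (v i) :=
    ((hF _).hasFDerivAt.comp_hasDerivAt _ (hasDerivAt_update v i (v i)))
  rw [Function.update_eq_self] at h1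
  exact h1.deriv

lemma contDiff_pdv {F : (Fin d → ℝ) → ℝ} (hF : ContDiff ℝ 2 F) (i : Fin d) :
    ContDiff ℝ 1 (pdv i F) := by
  have h : pdv i F = fun v => (ContinuousLinearMap.apply ℝ ℝ
      (Pi.single i 1 : Fin d → ℝ)) (fderiv ℝ F v) :=
    funext fun v => pdv_eq_fderiv (hF.differentiable (by norm_num)) i v
  rw [h]
  exact (ContinuousLinearMap.apply ℝ ℝ _).contDiff.comp (hF.fderiv_right (m := 1) (by norm_num))

lemma continuous_pdv_pdv {F : (Fin d → ℝ) → ℝ} (hF : ContDiff ℝ 2 F) (i : Fin d) :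
    Continuous (pdv i (pdv i F)) := by
  have h1 := contDiff_pdv hF i
  have h : pdv i (pdv i F) = fun v => (ContinuousLinearMap.apply ℝ ℝ
      (Pi.single i 1 : Fin d → ℝ)) (fderiv ℝ (pdv i F) v) :=
    funext fun v => pdv_eq_fderiv (h1.differentiable (by norm_num)) i v
  rw [h]
  exact (ContinuousLinearMap.apply ℝ ℝ _).continuous.comp (h1.continuous_fderiv (by norm_num))

lemma pdv_eq_zero_of_curve_const {F : (Fin d → ℝ) → ℝ} {i : Fin d} {v : Fin d → ℝ}
    (h : ∀ t, F (Function.update v i t) = F v) : pdv i F v = 0 := by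
  have h2 : (fun t : ℝ => F (Function.update v i t)) = fun _ => F v := funext h
  rw [pdv, h2, deriv_const]

lemma pdv_eq_zero_of_not_lt {F : (Fin d → ℝ) → ℝ} {k : Fin d}
    (hF : ∀ v w, (∀ j, j < k → v j = w j) → F v = F w) {i : Fin d} (hik : ¬ i < k)
    (v : Fin d → ℝ) : pdv i F v = 0 := by
  refine pdv_eq_zero_of_curve_const fun t => hF _ _ fun j hj => ?_
  have hji : j ≠ i := fun hh => hik (hh ▸ hj)
  rw [Function.update_of_ne hji]

lemma pdv_eq_zero_of_not_dependsOn {F : (Fin d → ℝ) → ℝ} {i : Fin d}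
    (h : ¬ DependsOnCoord F i) (v : Fin d → ℝ) : pdv i F v = 0 := by
  refine pdv_eq_zero_of_curve_const fun t => ?_
  by_contra hne
  exact h ⟨Function.update v i t, v, fun j hj => Function.update_of_ne hj _ _, hne⟩

lemma pdv_congr_of_agree {F : (Fin d → ℝ) → ℝ} {k : Fin d}
    (hF : ∀ v w, (∀ j, j < k → v j = w j) → F v = F w) (i : Fin d) {v w : Fin d → ℝ}
    (hvw : ∀ j, j < k → v j = w j) : pdv i F v = pdv i F w := by
  by_cases hik : i < k
  · have hcurve : (fun t : ℝ => F (Function.update v i t))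
        = fun t => F (Function.update w i t) := by
      funext t
      refine hF _ _ fun j hj => ?_
      by_cases hji : j = i
      · subst hji; simp
      · rw [Function.update_of_ne hji, Function.update_of_ne hji]; exact hvw j hj
    rw [pdv, pdv, hcurve, hvw i hik]
  · rw [pdv_eq_zero_of_not_lt hF hik, pdv_eq_zero_of_not_lt hF hik]

end LeafAux

noncomputable def Yrec {d : ℕ} (f : Fin d → (Fin d → ℝ) → ℝ) (n : ℕ) (e : Fin d → ℝ) : ℝ :=
  if h : n < d then
    f ⟨n, h⟩ (fun j => if hj : (j : ℕ) < n then Yrec f j e else 0) + e ⟨n, h⟩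
  else 0
termination_by n
decreasing_by exact hj

namespace LeafAux

lemma Yrec_congr (f : Fin d → (Fin d → ℝ) → ℝ) :
    ∀ (n : ℕ) (e e' : Fin d → ℝ), (∀ j : Fin d, (j : ℕ) ≤ n → e j = e' j) →
      Yrec f n e = Yrec f n e' := by
  intro n
  induction n using Nat.strong_induction_on with
  | _ n ih =>
    intro e e' h
    rw [Yrec, Yrec]
    by_cases hn : n < d
    · rw [dif_pos hn, dif_pos hn]
      have harg : (fun j : Fin d => if hj : (j : ℕ) < n then Yrec f j e else 0)
          = fun j : Fin d => if hj : (j : ℕ) < n then Yrec f j e' else 0 := by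
        funext j
        by_cases hj : (j : ℕ) < n
        · rw [dif_pos hj, dif_pos hj]
          exact ih j hj e e' fun m hm => h m (le_of_lt (lt_of_le_of_lt hm hj))
        · rw [dif_neg hj, dif_neg hj]
      rw [harg, h ⟨n, hn⟩ le_rfl]
    · rw [dif_neg hn, dif_neg hn]

lemma Yrec_spec {f : Fin d → (Fin d → ℝ) → ℝ}
    (hpast : ∀ k (v w : Fin d → ℝ), (∀ j, j < k → v j = w j) → f k v = f k w)
    {Ω : Type*} {x : Ω → Fin d → ℝ} {ε : Fin d → Ω → ℝ}
    (hx : ∀ ω k, x ω k = f k (x ω) + ε k ω) (ω : Ω) :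
    ∀ (n : ℕ) (hn : n < d), x ω ⟨n, hn⟩ = Yrec f n (fun j => ε j ω) := by
  intro n
  induction n using Nat.strong_induction_on with
  | _ n ih =>
    intro hn
    rw [Yrec, dif_pos hn, hx ω ⟨n, hn⟩]
    congr 1
    refine hpast _ _ _ fun j hj => ?_
    have hj' : (j : ℕ) < n := hj
    rw [dif_pos hj']
    have := ih j hj' j.isLt
    simpa using this

lemma Yrec_continuous {f : Fin d → (Fin d → ℝ) → ℝ} (hf : ∀ k, Continuous (f k)) :
    ∀ n : ℕ, Continuous (fun e : Fin d → ℝ => Yrec f n e) := by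
  intro n
  induction n using Nat.strong_induction_on with
  | _ n ih =>
    have heq : (fun e : Fin d → ℝ => Yrec f n e) = fun e =>
        if h : n < d then
          f ⟨n, h⟩ (fun j => if hj : (j : ℕ) < n then Yrec f j e else 0) + e ⟨n, h⟩
        else 0 := by
      funext e; rw [Yrec]
    rw [heq]
    by_cases hn : n < d
    · simp only [dif_pos hn]
      refine Continuous.add ((hf _).comp (continuous_pi fun j => ?_)) (continuous_apply _)
      by_cases hj : (j : ℕ) < n
      · simp only [dif_pos hj]; exact ih j hj
      · simp only [dif_neg hj]; exact continuous_const
    · simp only [dif_neg hn]; exact continuous_const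

end LeafAux

namespace LeafAux

lemma hasDerivAt_coord (w : Fin d → ℝ) (i k : Fin d) (s : ℝ) :
    HasDerivAt (fun t : ℝ => Function.update w i t k) (if k = i then (1:ℝ) else 0) s := by
  by_cases hk : k = i
  · subst hk
    have h : (fun t : ℝ => Function.update w k t k) = fun t => t := by
      funext t; simp
    rw [h, if_pos rfl]; exact hasDerivAt_id _
  · have h : (fun t : ℝ => Function.update w i t k) = fun _ => w k := by
      funext t; exact Function.update_of_ne hk _ _
    rw [h, if_neg hk]; exact hasDerivAt_const _ _

lemma hasDerivAt_curve {f : Fin d → (Fin d → ℝ) → ℝ} (hf : ∀ k, ContDiff ℝ 2 (f k))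
    (k : Fin d) (w : Fin d → ℝ) (i : Fin d) (s : ℝ) :
    HasDerivAt (fun t : ℝ => f k (Function.update w i t))
      (deriv (fun t : ℝ => f k (Function.update w i t)) s) s := by
  have hcurve : ContDiff ℝ 2 (fun t : ℝ => f k (Function.update w i t)) :=
    (hf k).comp (contDiff_update w i)
  exact ((hcurve.differentiable (by norm_num)) s).hasDerivAt

lemma pdvL_eq {σ : ℝ} (hσ : σ ≠ 0) {f : Fin d → (Fin d → ℝ) → ℝ}
    (hf : ∀ k, ContDiff ℝ 2 (f k)) (i : Fin d) (w : Fin d → ℝ) :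
    pdv i (fun v => (-∑ k, (v k - f k v) ^ 2 / (2 * σ ^ 2))
        - (d : ℝ) / 2 * Real.log (2 * Real.pi * σ ^ 2)) w
      = -(σ ^ 2)⁻¹ * ∑ k, (w k - f k w) * ((if k = i then (1:ℝ) else 0) - pdv i (f k) w) := by
  have hterm : ∀ k : Fin d, HasDerivAt
      (fun t : ℝ => (Function.update w i t k - f k (Function.update w i t)) ^ 2 / (2 * σ ^ 2))
      ((σ ^ 2)⁻¹ * ((w k - f k w) * ((if k = i then (1:ℝ) else 0) - pdv i (f k) w))) (w i) := by
    intro k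
    have h1 := hasDerivAt_coord w i k (w i)
    have h2 : HasDerivAt (fun t : ℝ => f k (Function.update w i t)) (pdv i (f k) w) (w i) :=
      hasDerivAt_curve hf k w i (w i)
    have h3 := ((h1.sub h2).pow 2).div_const (2 * σ ^ 2)
    simp only [Pi.sub_apply, Pi.pow_apply] at h3
    refine h3.congr_deriv ?_
    simp only [Function.update_eq_self, pow_one, Nat.cast_ofNat]
    field_simp
    ring
  have hH := (HasDerivAt.sum (fun k (_ : k ∈ Finset.univ) => hterm k)).neg.sub_const
    ((d : ℝ) / 2 * Real.log (2 * Real.pi * σ ^ 2))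
  have hderiv := hH.deriv
  simp only [Pi.neg_apply, Finset.sum_apply] at hderiv
  rw [pdv]
  rw [show (fun t : ℝ => (fun v => (-∑ k, (v k - f k v) ^ 2 / (2 * σ ^ 2))
      - (d : ℝ) / 2 * Real.log (2 * Real.pi * σ ^ 2)) (Function.update w i t))
    = fun t : ℝ => (-∑ k, (Function.update w i t k - f k (Function.update w i t)) ^ 2
        / (2 * σ ^ 2)) - (d : ℝ) / 2 * Real.log (2 * Real.pi * σ ^ 2) from rfl]
  rw [hderiv, ← Finset.mul_sum, neg_mul]

end LeafAux

namespace LeafAux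

lemma pdv2L_eq {σ : ℝ} (hσ : σ ≠ 0) {f : Fin d → (Fin d → ℝ) → ℝ}
    (hf : ∀ k, ContDiff ℝ 2 (f k)) (i : Fin d) (u : Fin d → ℝ) :
    pdv i (pdv i (fun v => (-∑ k, (v k - f k v) ^ 2 / (2 * σ ^ 2))
        - (d : ℝ) / 2 * Real.log (2 * Real.pi * σ ^ 2))) u
      = -(σ ^ 2)⁻¹ * ∑ k, (((if k = i then (1:ℝ) else 0) - pdv i (f k) u) ^ 2
          - (u k - f k u) * pdv i (pdv i (f k)) u) := by
  have hrw : (fun t : ℝ => pdv i (fun v => (-∑ k, (v k - f k v) ^ 2 / (2 * σ ^ 2))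
        - (d : ℝ) / 2 * Real.log (2 * Real.pi * σ ^ 2)) (Function.update u i t))
      = fun t => -(σ ^ 2)⁻¹ * ∑ k, (Function.update u i t k - f k (Function.update u i t))
          * ((if k = i then (1:ℝ) else 0) - deriv (fun s => f k (Function.update u i s)) t) := by
    funext t
    rw [pdvL_eq hσ hf i (Function.update u i t)]
    congr 1
    refine Finset.sum_congr rfl fun k _ => ?_
    rw [curve_pdv]
  have hterm : ∀ k : Fin d, HasDerivAt
      (fun t : ℝ => (Function.update u i t k - f k (Function.update u i t))
        * ((if k = i then (1:ℝ) else 0) - deriv (fun s => f k (Function.update u i s)) t))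
      ((((if k = i then (1:ℝ) else 0) - pdv i (f k) u) ^ 2
          - (u k - f k u) * pdv i (pdv i (f k)) u)) (u i) := by
    intro k
    have h1 := hasDerivAt_coord u i k (u i)
    have h2 : HasDerivAt (fun t : ℝ => f k (Function.update u i t)) (pdv i (f k) u) (u i) :=
      hasDerivAt_curve hf k u i (u i)
    have hcurve : ContDiff ℝ 2 (fun t : ℝ => f k (Function.update u i t)) :=
      (hf k).comp (contDiff_update u i)
    have hd2 : Differentiable ℝ (deriv (fun t : ℝ => f k (Function.update u i t))) := by
      have hcurve' : ContDiff ℝ ((1 : ℕ∞) + 1) (fun t : ℝ => f k (Function.update u i t)) :=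
        hcurve.of_le (by norm_num)
      exact (contDiff_succ_iff_deriv.mp hcurve').2.2.differentiable (by norm_num)
    have h4 : (fun t : ℝ => pdv i (f k) (Function.update u i t))
        = fun t => deriv (fun s : ℝ => f k (Function.update u i s)) t :=
      funext fun t => curve_pdv _ _ _ _
    have h6 : pdv i (pdv i (f k)) u
        = deriv (fun t => deriv (fun s : ℝ => f k (Function.update u i s)) t) (u i) := by
      rw [show pdv i (pdv i (f k)) u
        = deriv (fun t => pdv i (f k) (Function.update u i t)) (u i) from rfl, h4]
    have h3 : HasDerivAt (fun t : ℝ => deriv (fun s : ℝ => f k (Function.update u i s)) t)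
        (pdv i (pdv i (f k)) u) (u i) := by
      rw [h6]
      exact (hd2 (u i)).hasDerivAt
    have h7 := (h1.sub h2).mul ((hasDerivAt_const (u i) (if k = i then (1:ℝ) else 0)).sub h3)
    simp only [Pi.sub_apply, Pi.mul_apply] at h7
    refine h7.congr_deriv ?_
    have hpd : deriv (fun s : ℝ => f k (Function.update u i s)) (u i) = pdv i (f k) u := rfl
    simp only [Function.update_eq_self, hpd]
    ring
  have hsum := (HasDerivAt.sum (fun k (_ : k ∈ Finset.univ) => hterm k)).const_mul (-(σ ^ 2)⁻¹)
  have hfinal : pdv i (pdv i (fun v => (-∑ k, (v k - f k v) ^ 2 / (2 * σ ^ 2))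
      - (d : ℝ) / 2 * Real.log (2 * Real.pi * σ ^ 2))) u
      = deriv (fun t : ℝ => pdv i (fun v => (-∑ k, (v k - f k v) ^ 2 / (2 * σ ^ 2))
        - (d : ℝ) / 2 * Real.log (2 * Real.pi * σ ^ 2)) (Function.update u i t)) (u i) := rfl
  simp only [Finset.sum_apply] at hsum
  rw [hfinal, hrw, hsum.deriv]

lemma neg_pdv2L {σ : ℝ} (hσ : σ ≠ 0) {f : Fin d → (Fin d → ℝ) → ℝ}
    (hf : ∀ k, ContDiff ℝ 2 (f k))
    (hpast : ∀ k (v w : Fin d → ℝ), (∀ j, j < k → v j = w j) → f k v = f k w)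
    (i : Fin d) (u : Fin d → ℝ) :
    -(pdv i (pdv i (fun v => (-∑ k, (v k - f k v) ^ 2 / (2 * σ ^ 2))
        - (d : ℝ) / 2 * Real.log (2 * Real.pi * σ ^ 2))) u)
      = (σ ^ 2)⁻¹ * (1 + ∑ k ∈ Finset.univ.erase i,
          ((pdv i (f k) u) ^ 2 - (u k - f k u) * pdv i (pdv i (f k)) u)) := by
  rw [pdv2L_eq hσ hf i u]
  have hii : ∀ v, pdv i (f i) v = 0 :=
    fun v => pdv_eq_zero_of_not_lt (hpast i) (lt_irrefl i) v
  have hii2 : pdv i (pdv i (f i)) u = 0 := by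
    refine pdv_eq_zero_of_curve_const fun t => ?_
    rw [hii, hii]
  rw [← Finset.sum_erase_add _ _ (Finset.mem_univ i)]
  rw [if_pos rfl, hii u, hii2]
  have hsum : ∑ k ∈ Finset.univ.erase i, (((if k = i then (1:ℝ) else 0) - pdv i (f k) u) ^ 2
          - (u k - f k u) * pdv i (pdv i (f k)) u)
      = ∑ k ∈ Finset.univ.erase i,
          ((pdv i (f k) u) ^ 2 - (u k - f k u) * pdv i (pdv i (f k)) u) := by
    refine Finset.sum_congr rfl fun k hk => ?_
    rw [if_neg (Finset.ne_of_mem_erase hk)]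
    ring
  rw [hsum]
  ring

end LeafAux

namespace LeafAux

lemma gaussian_pdf_even (v : ℝ≥0) (y : ℝ) :
    gaussianPDFReal 0 v (-y) = gaussianPDFReal 0 v y := by
  simp [gaussianPDFReal, neg_sq]

lemma integrable_id_gaussian {v : ℝ≥0} (hv : v ≠ 0) :
    Integrable (fun y : ℝ => y) (gaussianReal 0 v) := by
  have hvpos : (0:ℝ) < (v:ℝ) := by exact_mod_cast zero_lt_iff.mpr hv
  rw [gaussianReal_of_var_ne_zero _ hv]
  rw [integrable_withDensity_iff (measurable_gaussianPDF _ _)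
    (Filter.Eventually.of_forall fun y => ENNReal.ofReal_lt_top)]
  have heq : (fun y : ℝ => y * (gaussianPDF 0 v y).toReal)
      = fun y => (Real.sqrt (2 * Real.pi * v))⁻¹ * (y * Real.exp (-(2 * v : ℝ)⁻¹ * y ^ 2)) := by
    funext y
    rw [gaussianPDF, ENNReal.toReal_ofReal (gaussianPDFReal_nonneg _ _ _)]
    rw [gaussianPDFReal]
    rw [show -(y - 0) ^ 2 / (2 * (v:ℝ)) = -(2 * (v:ℝ))⁻¹ * y ^ 2 by rw [sub_zero, neg_div, div_eq_inv_mul, ← neg_mul]]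
    ring
  rw [heq]
  exact (integrable_mul_exp_neg_mul_sq (by positivity)).const_mul _

lemma integral_id_gaussian {v : ℝ≥0} (hv : v ≠ 0) :
    ∫ y, y ∂(gaussianReal 0 v) = 0 := by
  rw [gaussianReal_of_var_ne_zero _ hv]
  have hpdf : gaussianPDF 0 v = fun y => ((Real.toNNReal (gaussianPDFReal 0 v y) : ℝ≥0) : ℝ≥0∞) :=
    rfl
  rw [hpdf, integral_withDensity_eq_integral_smul
    (measurable_gaussianPDFReal 0 v).real_toNNReal (fun y : ℝ => y)]
  have heq : (fun y : ℝ => (Real.toNNReal (gaussianPDFReal 0 v y)) • y)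
      = fun y => gaussianPDFReal 0 v y * y := by
    funext y
    rw [NNReal.smul_def, smul_eq_mul, Real.coe_toNNReal _ (gaussianPDFReal_nonneg _ _ _)]
  rw [heq]
  have hodd := integral_neg_eq_self (fun y : ℝ => gaussianPDFReal 0 v y * y) volume
  have : ∫ y : ℝ, gaussianPDFReal 0 v (-y) * (-y) = ∫ y : ℝ, gaussianPDFReal 0 v y * y := hodd
  simp only [gaussian_pdf_even, mul_neg] at this
  rw [integral_neg] at this
  linarith

end LeafAux

/-- **Leaf Node Identifiability (Theorem 3.1).**
In an ANM `xₖ = fₖ(x) + εₖ` (each `fₖ` depending only on earlier coordinates) with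
independent homoscedastic Gaussian noise, the SJIM diagonal satisfies
`E[−∂²L/∂vᵢ²(x)] = 1/σ² + σ⁻² ∑_{k≠i} E[(∂ᵢfₖ(x))²]`; under causal faithfulness,
`l` attains `E[−∂²L/∂v_l²(x)] = 1/σ² = minᵢ E[−∂²L/∂vᵢ²(x)]` iff `l` is a sink. -/
theorem leaf_node_identifiability
    {d : ℕ} (hd : 1 ≤ d) (σ : ℝ) (hσ : 0 < σ)
    {Ω : Type*} [MeasurableSpace Ω] (μ : Measure Ω) [IsProbabilityMeasure μ]
    (ε : Fin d → Ω → ℝ)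
    (hindep : iIndepFun ε μ)
    (hgauss : ∀ k, μ.map (ε k) = gaussianReal 0 (Real.toNNReal (σ ^ 2)))
    (f : Fin d → (Fin d → ℝ) → ℝ)
    (hf : ∀ k, ContDiff ℝ 2 (f k))
    (hpast : ∀ k (v w : Fin d → ℝ), (∀ j, j < k → v j = w j) → f k v = f k w)
    (x : Ω → Fin d → ℝ)
    (hx : ∀ ω k, x ω k = f k (x ω) + ε k ω)
    (L : (Fin d → ℝ) → ℝ)
    (hL : L = fun v => (-∑ k, (v k - f k v) ^ 2 / (2 * σ ^ 2))
        - (d : ℝ) / 2 * Real.log (2 * Real.pi * σ ^ 2))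
    (hint1 : ∀ i k, k ≠ i → Integrable (fun ω => (pdv i (f k) (x ω)) ^ 2) μ)
    (hint2 : ∀ i k, k ≠ i → Integrable (fun ω => pdv i (pdv i (f k)) (x ω)) μ) :
    (∀ i, ∫ ω, -(pdv i (pdv i L) (x ω)) ∂μ
        = 1 / σ ^ 2 + (σ ^ 2)⁻¹ * ∑ k ∈ Finset.univ.erase i,
            ∫ ω, (pdv i (f k) (x ω)) ^ 2 ∂μ) ∧
    ((∀ i k, k ≠ i → DependsOnCoord (f k) i → 0 < ∫ ω, (pdv i (f k) (x ω)) ^ 2 ∂μ) →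
      ∀ l, ((∫ ω, -(pdv l (pdv l L) (x ω)) ∂μ = 1 / σ ^ 2) ∧
            (∀ i, ∫ ω, -(pdv l (pdv l L) (x ω)) ∂μ ≤ ∫ ω, -(pdv i (pdv i L) (x ω)) ∂μ))
          ↔ ∀ k, ¬ DependsOnCoord (f k) l) := by
  classical
  have hσne : σ ≠ 0 := ne_of_gt hσ
  have hσ2 : (σ : ℝ) ^ 2 ≠ 0 := pow_ne_zero 2 hσne
  subst hL
  -- a.e. measurability of the noises
  have hv0 : Real.toNNReal (σ ^ 2) ≠ 0 := by
    simp only [ne_eq, Real.toNNReal_eq_zero, not_le]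
    positivity
  have hae : ∀ j, AEMeasurable (ε j) μ := by
    intro j
    by_contra h
    have h1 := hgauss j
    rw [Measure.map_of_not_aemeasurable h] at h1
    have h2 : (gaussianReal 0 (Real.toNNReal (σ ^ 2))) Set.univ = 1 := measure_univ
    rw [← h1] at h2
    simp at h2
  obtain ⟨ε', hε'meas, hε'ae⟩ : ∃ ε' : Fin d → Ω → ℝ,
      (∀ j, Measurable (ε' j)) ∧ (∀ j, ε j =ᵐ[μ] ε' j) :=
    ⟨fun j => (hae j).mk (ε j), fun j => (hae j).measurable_mk, fun j => (hae j).ae_eq_mk⟩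
  have haeall : ∀ᵐ ω ∂μ, ∀ j, ε j ω = ε' j ω := ae_all_iff.mpr fun j => hε'ae j
  -- independence transfers to the measurable modifications
  have hindep' : iIndepFun ε' μ := by
    rw [iIndepFun_iff_measure_inter_preimage_eq_mul] at hindep ⊢
    intro S sets hsets
    have h1 : ∀ j : Fin d, μ (ε' j ⁻¹' sets j) = μ (ε j ⁻¹' sets j) := by
      intro j
      refine measure_congr (Filter.eventuallyEq_set.mpr ?_)
      filter_upwards [hε'ae j] with ω hω
      simp [Set.mem_preimage, hω]
    have h2 : μ (⋂ i ∈ S, ε' i ⁻¹' sets i) = μ (⋂ i ∈ S, ε i ⁻¹' sets i) := by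
      refine measure_congr (Filter.eventuallyEq_set.mpr ?_)
      filter_upwards [haeall] with ω hω
      simp only [Set.mem_iInter, Set.mem_preimage]
      refine ⟨fun h j hj => ?_, fun h j hj => ?_⟩
      · rw [hω j]; exact h j hj
      · rw [← hω j]; exact h j hj
    rw [h2, hindep S hsets]
    exact Finset.prod_congr rfl fun j _ => (h1 j).symm
  have hmap' : ∀ k, μ.map (ε' k) = gaussianReal 0 (Real.toNNReal (σ ^ 2)) := fun k => by
    rw [← Measure.map_congr (hε'ae k), hgauss k]
  have hε'int : ∀ k, Integrable (ε' k) μ := by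
    intro k
    have h1 : Integrable (fun y : ℝ => y) (μ.map (ε' k)) := by
      rw [hmap' k]; exact LeafAux.integrable_id_gaussian hv0
    exact (integrable_map_measure aestronglyMeasurable_id (hε'meas k).aemeasurable).mp h1
  have hε'mean : ∀ k, ∫ ω, ε' k ω ∂μ = 0 := by
    intro k
    have h1 : ∫ ω, ε' k ω ∂μ = ∫ y, y ∂(μ.map (ε' k)) :=
      (integral_map (hε'meas k).aemeasurable aestronglyMeasurable_id).symm
    rw [h1, hmap' k]
    exact LeafAux.integral_id_gaussian hv0
  -- structural representation of the solution
  have hxY : ∀ ω (m : Fin d), x ω m = Yrec f (m : ℕ) (fun j => ε j ω) := by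
    intro ω m
    have := LeafAux.Yrec_spec hpast hx ω (m : ℕ) m.isLt
    simpa using this
  set x' : Ω → Fin d → ℝ := fun ω m => Yrec f (m : ℕ) (fun j => ε' j ω) with hx'def
  have hxx' : ∀ᵐ ω ∂μ, x ω = x' ω := by
    filter_upwards [haeall] with ω hω
    funext m
    rw [hxY ω m]
    exact LeafAux.Yrec_congr f (m : ℕ) _ _ fun j _ => hω j
  -- cross terms vanish
  have hcross : ∀ (i k : Fin d), k ≠ i →
      Integrable (fun ω => ε k ω * pdv i (pdv i (f k)) (x ω)) μ ∧
      ∫ ω, ε k ω * pdv i (pdv i (f k)) (x ω) ∂μ = 0 := by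
    intro i k hki
    have hGcont : Continuous (pdv i (pdv i (f k))) := LeafAux.continuous_pdv_pdv (hf k) i
    have hdep1 : ∀ v w : Fin d → ℝ, (∀ j, j < k → v j = w j) →
        pdv i (f k) v = pdv i (f k) w :=
      fun v w h => LeafAux.pdv_congr_of_agree (hpast k) i h
    have hGdep : ∀ v w : Fin d → ℝ, (∀ j, j < k → v j = w j) →
        pdv i (pdv i (f k)) v = pdv i (pdv i (f k)) w :=
      fun v w h => LeafAux.pdv_congr_of_agree hdep1 i h
    set T : Finset (Fin d) := Finset.univ.erase k with hTdef
    set φ : ((j : T) → ℝ) → ℝ := fun r =>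
      pdv i (pdv i (f k)) (fun m => Yrec f (m : ℕ)
        (fun j => if h : j ∈ T then r ⟨j, h⟩ else 0)) with hφdef
    have hφcont : Continuous φ := by
      refine hGcont.comp (continuous_pi fun m => ?_)
      refine (LeafAux.Yrec_continuous (fun k => (hf k).continuous) (m : ℕ)).comp
        (continuous_pi fun j => ?_)
      by_cases h : j ∈ T
      · simp only [dif_pos h]; exact continuous_apply _
      · simp only [dif_neg h]; exact continuous_const
    have hdisj : Disjoint ({k} : Finset (Fin d)) T := by
      simp [hTdef]
    have hIF := hindep'.indepFun_finset {k} T hdisj hε'meas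
    have hIndep0 := hIF.comp
      (φ := fun r : ((j : ({k} : Finset (Fin d))) → ℝ) => r ⟨k, Finset.mem_singleton_self k⟩)
      (ψ := φ) (measurable_pi_apply _ : Measurable fun r : ((j : ({k} : Finset (Fin d))) → ℝ) => r ⟨k, Finset.mem_singleton_self k⟩) hφcont.measurable
    have hφx' : ∀ ω, φ (fun j : T => ε' j ω) = pdv i (pdv i (f k)) (x' ω) := by
      intro ω
      refine hGdep _ _ fun m hm => ?_
      refine LeafAux.Yrec_congr f (m : ℕ) _ _ fun j hj => ?_
      have hjk : j ∈ T := by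
        refine Finset.mem_erase.mpr ⟨?_, Finset.mem_univ j⟩
        intro hjeq
        have : (j : ℕ) < (k : ℕ) := lt_of_le_of_lt hj hm
        rw [hjeq] at this
        exact lt_irrefl _ this
      rw [dif_pos hjk]
    have hIndep : IndepFun (ε' k) (fun ω => pdv i (pdv i (f k)) (x' ω)) μ := by
      have heq2 : ((fun r : ((j : ({k} : Finset (Fin d))) → ℝ) =>
          r ⟨k, Finset.mem_singleton_self k⟩) ∘ (fun a (j : ({k} : Finset (Fin d))) => ε' j a))
            = ε' k := rfl
      have heq3 : (φ ∘ fun a (j : T) => ε' j a) = fun ω => pdv i (pdv i (f k)) (x' ω) :=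
        funext fun ω => hφx' ω
      rw [heq2, heq3] at hIndep0
      exact hIndep0
    have hGx_int : Integrable (fun ω => pdv i (pdv i (f k)) (x ω)) μ := hint2 i k hki
    have hGx'_int : Integrable (fun ω => pdv i (pdv i (f k)) (x' ω)) μ := by
      refine hGx_int.congr ?_
      filter_upwards [hxx'] with ω hω
      rw [hω]
    have hmul_int' : Integrable (fun ω => ε' k ω * pdv i (pdv i (f k)) (x' ω)) μ := by
      have := hIndep.integrable_mul (hε'int k) hGx'_int
      exact this
    have hmul_eq' : ∫ ω, ε' k ω * pdv i (pdv i (f k)) (x' ω) ∂μ = 0 := by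
      have h5 := hIndep.integral_mul_eq_mul_integral (hε'int k).aestronglyMeasurable hGx'_int.aestronglyMeasurable
      have hfun : (fun ω => ε' k ω * pdv i (pdv i (f k)) (x' ω))
          = (ε' k * fun ω => pdv i (pdv i (f k)) (x' ω)) := rfl
      rw [hfun, h5, hε'mean k, zero_mul]
    have haeprod : (fun ω => ε k ω * pdv i (pdv i (f k)) (x ω))
        =ᵐ[μ] fun ω => ε' k ω * pdv i (pdv i (f k)) (x' ω) := by
      filter_upwards [hε'ae k, hxx'] with ω h1 h2
      rw [h1, h2]
    refine ⟨hmul_int'.congr haeprod.symm, ?_⟩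
    rw [integral_congr_ae haeprod, hmul_eq']
  -- the main formula
  have hformula : ∀ i : Fin d, ∫ ω, -(pdv i (pdv i (fun v =>
        (-∑ k, (v k - f k v) ^ 2 / (2 * σ ^ 2))
          - (d : ℝ) / 2 * Real.log (2 * Real.pi * σ ^ 2))) (x ω)) ∂μ
      = 1 / σ ^ 2 + (σ ^ 2)⁻¹ * ∑ k ∈ Finset.univ.erase i,
          ∫ ω, (pdv i (f k) (x ω)) ^ 2 ∂μ := by
    intro i
    have hpt : ∀ ω, -(pdv i (pdv i (fun v =>
        (-∑ k, (v k - f k v) ^ 2 / (2 * σ ^ 2))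
          - (d : ℝ) / 2 * Real.log (2 * Real.pi * σ ^ 2))) (x ω))
        = (σ ^ 2)⁻¹ * (1 + ∑ k ∈ Finset.univ.erase i,
            ((pdv i (f k) (x ω)) ^ 2 - ε k ω * pdv i (pdv i (f k)) (x ω))) := by
      intro ω
      rw [LeafAux.neg_pdv2L hσne hf hpast i (x ω)]
      congr 2
      refine Finset.sum_congr rfl fun k _ => ?_
      have hεk : x ω k - f k (x ω) = ε k ω := by rw [hx ω k]; ring
      rw [hεk]
    have hintk : ∀ k ∈ Finset.univ.erase i, Integrable (fun ω =>
        (pdv i (f k) (x ω)) ^ 2 - ε k ω * pdv i (pdv i (f k)) (x ω)) μ := fun k hk =>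
      (hint1 i k (Finset.ne_of_mem_erase hk)).sub (hcross i k (Finset.ne_of_mem_erase hk)).1
    have hint_sum : Integrable (fun ω => ∑ k ∈ Finset.univ.erase i,
        ((pdv i (f k) (x ω)) ^ 2 - ε k ω * pdv i (pdv i (f k)) (x ω))) μ :=
      integrable_finset_sum _ hintk
    have h6 : ∫ ω, -(pdv i (pdv i (fun v =>
        (-∑ k, (v k - f k v) ^ 2 / (2 * σ ^ 2))
          - (d : ℝ) / 2 * Real.log (2 * Real.pi * σ ^ 2))) (x ω)) ∂μ
        = ∫ ω, (σ ^ 2)⁻¹ * (1 + ∑ k ∈ Finset.univ.erase i,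
            ((pdv i (f k) (x ω)) ^ 2 - ε k ω * pdv i (pdv i (f k)) (x ω))) ∂μ :=
      integral_congr_ae (Filter.Eventually.of_forall hpt)
    have h7 : ∑ k ∈ Finset.univ.erase i, ∫ ω,
        ((pdv i (f k) (x ω)) ^ 2 - ε k ω * pdv i (pdv i (f k)) (x ω)) ∂μ
        = ∑ k ∈ Finset.univ.erase i, ∫ ω, (pdv i (f k) (x ω)) ^ 2 ∂μ := by
      refine Finset.sum_congr rfl fun k hk => ?_
      rw [integral_sub (hint1 i k (Finset.ne_of_mem_erase hk))
        (hcross i k (Finset.ne_of_mem_erase hk)).1,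
        (hcross i k (Finset.ne_of_mem_erase hk)).2, sub_zero]
    rw [h6, integral_const_mul, integral_add (integrable_const 1) hint_sum,
      integral_finset_sum _ hintk, h7]
    simp only [integral_const, measure_univ, probReal_univ, ENNReal.toReal_one, smul_eq_mul, one_mul]
    rw [mul_add, mul_one, one_div]
  refine ⟨hformula, ?_⟩
  -- Part 2
  intro hfaith l
  have hnonneg : ∀ (i k : Fin d), 0 ≤ ∫ ω, (pdv i (f k) (x ω)) ^ 2 ∂μ :=
    fun i k => integral_nonneg fun ω => sq_nonneg _
  constructor
  · rintro ⟨heq, -⟩ k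
    by_cases hkl : k = l
    · subst hkl
      rintro ⟨v, w, hvw, hne⟩
      exact hne (hpast k v w fun j hj => hvw j (ne_of_lt hj))
    · intro hdep
      have h1 := hformula l
      rw [heq] at h1
      have h2 : (σ ^ 2)⁻¹ * ∑ k ∈ Finset.univ.erase l,
          ∫ ω, (pdv l (f k) (x ω)) ^ 2 ∂μ = 0 := by linarith
      have h3 : ∑ k ∈ Finset.univ.erase l, ∫ ω, (pdv l (f k) (x ω)) ^ 2 ∂μ = 0 := by
        rcases mul_eq_zero.mp h2 with h | h
        · exact absurd h (inv_ne_zero hσ2)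
        · exact h
      have h4 : ∫ ω, (pdv l (f k) (x ω)) ^ 2 ∂μ = 0 := by
        have := (Finset.sum_eq_zero_iff_of_nonneg fun j _ => hnonneg l j).mp h3 k
          (Finset.mem_erase.mpr ⟨hkl, Finset.mem_univ k⟩)
        exact this
      have h5 := hfaith l k hkl hdep
      rw [h4] at h5
      exact lt_irrefl 0 h5
  · intro hnodep
    have hzero : ∀ k ∈ Finset.univ.erase l, ∫ ω, (pdv l (f k) (x ω)) ^ 2 ∂μ = 0 := by
      intro k _
      have : ∀ ω, (pdv l (f k) (x ω)) ^ 2 = 0 := fun ω => by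
        rw [LeafAux.pdv_eq_zero_of_not_dependsOn (hnodep k) (x ω)]; ring
      simp only [this, integral_zero]
    have hleq : ∫ ω, -(pdv l (pdv l (fun v =>
        (-∑ k, (v k - f k v) ^ 2 / (2 * σ ^ 2))
          - (d : ℝ) / 2 * Real.log (2 * Real.pi * σ ^ 2))) (x ω)) ∂μ = 1 / σ ^ 2 := by
      rw [hformula l, Finset.sum_eq_zero hzero, mul_zero, add_zero]
    refine ⟨hleq, fun i => ?_⟩
    rw [hleq, hformula i]
    have h8 : 0 ≤ (σ ^ 2)⁻¹ * ∑ k ∈ Finset.univ.erase i,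
        ∫ ω, (pdv i (f k) (x ω)) ^ 2 ∂μ := by
      refine mul_nonneg (by positivity) (Finset.sum_nonneg fun k _ => hnonneg i k)
    linarith
end

section
/- Let n ≥ 1, let B be an (n+1)×(n+1) real matrix with zero diagonal whose last column is zero, and let σ > 0. Write l for the last index, S for the set of the first n indices, B_SS for the top-left n×n block of B, and I := σ⁻²·(1 − B)ᵀ·(1 − B). Then the Schur complement of I with respect to the entry I_{ll} satisfies I_{SS} − I_{S,l}·(I_{ll})⁻¹·I_{l,S} = σ⁻²·(1_n − B_SS)ᵀ·(1_n − B_SS), i.e., marginalizing the leaf node l from the SJIM via the Schur complement yields exactly the SJIM of the linear ANM on the remaining n variables with structural matrix B_SS. -/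
/-!
The leaf column of `1 - B` is the unit vector `e_l`, so in the Gram matrix `(1 - B)ᵀ (1 - B)` the
`l`-th row and column both equal the `l`-th row of `1 - B`, and the pivot entry is `1`. The Schur
complement therefore subtracts exactly the outer product of that row, which is the contribution of
row `l` to the Gram sum; what remains is the Gram matrix of the top-left block of `1 - B`.
-/

open Matrix

namespace Matrix

section GramColumn

variable {m n R : Type*} [Fintype m] [DecidableEq m] [NonAssocSemiring R]
  {A : Matrix m n R} {r : m} {c : n}

theorem transpose_mul_self_apply_left_of_col_eq_single
    (hA : Aᵀ c = Pi.single r 1) (j : n) : (Aᵀ * A) c j = A r j := by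
  rw [mul_apply', hA, single_one_dotProduct]

theorem transpose_mul_self_apply_right_of_col_eq_single
    (hA : Aᵀ c = Pi.single r 1) (i : n) : (Aᵀ * A) i c = A r i := by
  change Aᵀ i ⬝ᵥ Aᵀ c = _
  rw [hA, dotProduct_single_one]
  rfl

end GramColumn

theorem transpose_mul_apply_castSucc {n : ℕ} {R : Type*} [NonUnitalNonAssocSemiring R]
    (A B : Matrix (Fin (n + 1)) (Fin (n + 1)) R) (i j : Fin n) :
    (Aᵀ * B) i.castSucc j.castSucc =
      ((A.submatrix Fin.castSucc Fin.castSucc)ᵀ * B.submatrix Fin.castSucc Fin.castSucc) i j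
        + A (Fin.last n) i.castSucc * B (Fin.last n) j.castSucc := by
  simp only [mul_apply, Fin.sum_univ_castSucc, transpose_apply, submatrix_apply]

end Matrix

theorem schur_marginalization_linear_anm_general
    {n : ℕ} (B : Matrix (Fin (n + 1)) (Fin (n + 1)) ℝ)
    (hleaf : ∀ k, B k (Fin.last n) = 0)
    (σ : ℝ)
    (I : Matrix (Fin (n + 1)) (Fin (n + 1)) ℝ)
    (hI : I = (σ ^ 2)⁻¹ • ((1 - B)ᵀ * (1 - B)))
    (Bss : Matrix (Fin n) (Fin n) ℝ)
    (hBss : Bss = B.submatrix Fin.castSucc Fin.castSucc) :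
    ∀ i j : Fin n,
      I i.castSucc j.castSucc
          - I i.castSucc (Fin.last n) * (I (Fin.last n) (Fin.last n))⁻¹
              * I (Fin.last n) j.castSucc
        = (σ ^ 2)⁻¹ * (((1 - Bss)ᵀ * (1 - Bss) : Matrix (Fin n) (Fin n) ℝ) i j) := by
  intro i j
  subst hI hBss
  have hcol : (1 - B)ᵀ (Fin.last n) = Pi.single (Fin.last n) 1 := by
    ext k
    simp [hleaf, one_apply, Pi.single_apply]
  have hblock : (1 - B).submatrix Fin.castSucc Fin.castSucc
      = 1 - B.submatrix Fin.castSucc Fin.castSucc := by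
    rw [← submatrix_one _ (Fin.castSucc_injective n) (α := ℝ)]
    rfl
  simp only [Matrix.smul_apply, smul_eq_mul,
    transpose_mul_self_apply_left_of_col_eq_single hcol,
    transpose_mul_self_apply_right_of_col_eq_single hcol, transpose_mul_apply_castSucc, hblock]
  set c := (σ ^ 2)⁻¹
  have hc : (1 - B) (Fin.last n) (Fin.last n) = 1 := by
    simp [hleaf]
  rw [hc, mul_one]
  linear_combination -((1 - B) (Fin.last n) i.castSucc * (1 - B) (Fin.last n) j.castSucc) *
    mul_inv_mul_cancel c

/-- **Exact Marginalization via the Schur complement (Theorem 3.2).**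
For a linear ANM with zero-diagonal adjacency matrix `B` whose last column (leaf
node `l`) is zero, the Schur complement of the SJIM `I = σ⁻² (1 − B)ᵀ (1 − B)`
with respect to `I l l` equals the SJIM `σ⁻² (1 − B_SS)ᵀ (1 − B_SS)` of the
linear ANM on the remaining variables. -/
theorem schur_marginalization_linear_anm
    {n : ℕ} (hn : 1 ≤ n) (B : Matrix (Fin (n + 1)) (Fin (n + 1)) ℝ)
    (hdiag : ∀ i, B i i = 0)
    (hleaf : ∀ k, B k (Fin.last n) = 0)
    (σ : ℝ) (hσ : 0 < σ)
    (I : Matrix (Fin (n + 1)) (Fin (n + 1)) ℝ)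
    (hI : I = (σ ^ 2)⁻¹ • ((1 - B)ᵀ * (1 - B)))
    (Bss : Matrix (Fin n) (Fin n) ℝ)
    (hBss : Bss = B.submatrix Fin.castSucc Fin.castSucc) :
    ∀ i j : Fin n,
      I i.castSucc j.castSucc
          - I i.castSucc (Fin.last n) * (I (Fin.last n) (Fin.last n))⁻¹
              * I (Fin.last n) j.castSucc
        = (σ ^ 2)⁻¹ * (((1 - Bss)ᵀ * (1 - Bss) : Matrix (Fin n) (Fin n) ℝ) i j) :=
  schur_marginalization_linear_anm_general B hleaf σ I hI Bss hBss
end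

section
/- Let n ≥ 1, σ > 0, and let (Ω, P) be a probability space. Let A : Ω → Matrix (Fin n) (Fin n) ℝ be an entrywise-integrable random matrix, and let g : Ω → (Fin n → ℝ) be a random vector such that each g_i and each product g_i·g_j is integrable. Consider the random (n+1)×(n+1) block matrix H(ω) with top-left block A(ω), bottom-right scalar entry σ⁻², off-diagonal column block H_{S,l}(ω) = −σ⁻²·g(ω) and row block H_{l,S}(ω) = −σ⁻²·g(ω)ᵀ, and define the sample-wise Schur complement Schur(H(ω)) := A(ω) − H_{S,l}(ω)·(σ⁻²)⁻¹·H_{l,S}(ω). Then the expectation gap Δ := E[Schur(H)] − (E[A] − E[H_{S,l}]·(σ⁻²)⁻¹·E[H_{l,S}]) satisfies Δ_{ij} = −σ⁻²·(E[g_i·g_j] − E[g_i]·E[g_j]) for all i, j, i.e., Δ = −σ⁻²·Cov(g). -/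
open MeasureTheory Matrix

/-- **Non-linear Marginalization Expectation Gap (Proposition 3.4).**
For the random block matrix `H` with top-left block `A`, bottom-right entry
`σ⁻²` and off-diagonal blocks `H_{S,l} = −σ⁻² g`, `H_{l,S} = −σ⁻² gᵀ`, the gap
`Δ = E[Schur(H)] − (E[A] − E[H_{S,l}]·(σ⁻²)⁻¹·E[H_{l,S}])` satisfies
`Δᵢⱼ = −σ⁻² (E[gᵢ gⱼ] − E[gᵢ]·E[gⱼ])`, i.e. `Δ = −σ⁻² Cov(g)`. -/
theorem nonlinear_marginalization_expectation_gap
    {n : ℕ} (hn : 1 ≤ n) (σ : ℝ) (hσ : 0 < σ)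
    {Ω : Type*} [MeasurableSpace Ω] (μ : Measure Ω) [IsProbabilityMeasure μ]
    (A : Ω → Matrix (Fin n) (Fin n) ℝ)
    (hA : ∀ i j : Fin n, Integrable (fun ω => A ω i j) μ)
    (g : Ω → Fin n → ℝ)
    (hg : ∀ i : Fin n, Integrable (fun ω => g ω i) μ)
    (hgg : ∀ i j : Fin n, Integrable (fun ω => g ω i * g ω j) μ)
    (HSl : Ω → Fin n → ℝ) (hHSl : ∀ ω i, HSl ω i = -(σ ^ 2)⁻¹ * g ω i)
    (HlS : Ω → Fin n → ℝ) (hHlS : ∀ ω j, HlS ω j = -(σ ^ 2)⁻¹ * g ω j)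
    (SchurH : Ω → Matrix (Fin n) (Fin n) ℝ)
    (hSchur : ∀ ω i j, SchurH ω i j
        = A ω i j - HSl ω i * ((σ ^ 2)⁻¹)⁻¹ * HlS ω j)
    (Δ : Matrix (Fin n) (Fin n) ℝ)
    (hΔ : ∀ i j, Δ i j
        = (∫ ω, SchurH ω i j ∂μ)
          - ((∫ ω, A ω i j ∂μ)
              - (∫ ω, HSl ω i ∂μ) * ((σ ^ 2)⁻¹)⁻¹ * (∫ ω, HlS ω j ∂μ))) :
    ∀ i j : Fin n,
      Δ i j = -(σ ^ 2)⁻¹ *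
        ((∫ ω, g ω i * g ω j ∂μ) - (∫ ω, g ω i ∂μ) * (∫ ω, g ω j ∂μ)) := by
  intro i j
  have hσ2 : (σ ^ 2) ≠ 0 := by positivity
  have hkey : ∀ ω, SchurH ω i j = A ω i j - (σ ^ 2)⁻¹ * (g ω i * g ω j) := by
    intro ω
    rw [hSchur, hHSl, hHlS, inv_inv]
    field_simp
  have h1 : (∫ ω, SchurH ω i j ∂μ)
      = (∫ ω, A ω i j ∂μ) - (σ ^ 2)⁻¹ * (∫ ω, g ω i * g ω j ∂μ) := by
    simp_rw [hkey]
    rw [integral_sub (hA i j) ((hgg i j).const_mul _), integral_const_mul]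
  have h2 : (∫ ω, HSl ω i ∂μ) = -(σ ^ 2)⁻¹ * (∫ ω, g ω i ∂μ) := by
    simp_rw [hHSl]; rw [integral_const_mul]
  have h3 : (∫ ω, HlS ω j ∂μ) = -(σ ^ 2)⁻¹ * (∫ ω, g ω j ∂μ) := by
    simp_rw [hHlS]; rw [integral_const_mul]
  rw [hΔ, h1, h2, h3, inv_inv]
  field_simp
  ring
end

section
/- Fix integers d ≥ 2 and 0 ≤ W ≤ d, and let S ⊆ Fin d be the set of the last W indices {d−W, …, d−1}. Let σ and τ be independent random permutations of Fin d, each uniformly distributed over the set of permutations that fix every index outside S and map S to itself. Then the expected Kendall rank correlation satisfies E[τ_K(σ, τ)] = 1 − W·(W−1)/(d·(d−1)). -/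
open Finset

/-- Number of discordant unordered pairs of distinct indices between two
permutations (Kendall's inversion count). -/
def kendallK {d : ℕ} (α β : Equiv.Perm (Fin d)) : ℕ :=
  ((Finset.univ : Finset (Fin d × Fin d)).filter
    (fun p => p.1 < p.2 ∧ ¬((α p.1 < α p.2) ↔ (β p.1 < β p.2)))).card

/-- Kendall rank correlation `τ_K(α, β) = 1 − 4 K(α, β) / (d (d − 1))`. -/
noncomputable def kendallTau {d : ℕ} (α β : Equiv.Perm (Fin d)) : ℝ :=
  1 - 4 * (kendallK α β : ℝ) / ((d : ℝ) * ((d : ℝ) - 1))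

/-- **Degradation Limit of Kendall's τ (Theorem B.1).**
If `σ` and `τ` are independent uniform random permutations over the set of
permutations of `Fin d` that fix every index outside the last `W` indices and
map that stratum to itself, then
`E[τ_K(σ, τ)] = 1 − W (W − 1) / (d (d − 1))`. -/
theorem kendall_tau_degradation
    {d W : ℕ} (hd : 2 ≤ d) (hW : W ≤ d)
    (S : Finset (Fin d)) (hS : S = Finset.univ.filter (fun i : Fin d => d - W ≤ (i : ℕ)))
    (G : Finset (Equiv.Perm (Fin d)))
    (hG : G = Finset.univ.filter
      (fun π : Equiv.Perm (Fin d) => (∀ i, i ∉ S → π i = i) ∧ ∀ i ∈ S, π i ∈ S)) :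
    (∑ α ∈ G, ∑ β ∈ G, kendallTau α β) / ((G.card : ℝ)) ^ 2
      = 1 - (W : ℝ) * ((W : ℝ) - 1) / ((d : ℝ) * ((d : ℝ) - 1)) := by
  have hSmem : ∀ i : Fin d, i ∈ S ↔ d - W ≤ (i : ℕ) := by
    intro i; simp [hS]
  have hGmem : ∀ π : Equiv.Perm (Fin d),
      π ∈ G ↔ (∀ i, i ∉ S → π i = i) ∧ ∀ i ∈ S, π i ∈ S := by
    intro π; simp [hG]
  -- For pairs not entirely inside S, every element of G preserves the order.
  have hmono : ∀ α ∈ G, ∀ i j : Fin d, i < j → ¬(i ∈ S ∧ j ∈ S) → α i < α j := by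
    intro α hα i j hij hns
    obtain ⟨hfix, hmap⟩ := (hGmem α).1 hα
    have hiS : i ∉ S := by
      intro hi
      exact hns ⟨hi, (hSmem j).2 (le_trans ((hSmem i).1 hi) (le_of_lt hij))⟩
    rw [hfix i hiS]
    by_cases hj : j ∈ S
    · have h1 : (i : ℕ) < d - W := by
        by_contra h; exact hiS ((hSmem i).2 (not_lt.1 h))
      have h2 : d - W ≤ ((α j : Fin d) : ℕ) := (hSmem _).1 (hmap j hj)
      exact Fin.lt_def.2 (lt_of_lt_of_le h1 h2)
    · rw [hfix j hj]; exact hij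
  -- G is closed under right multiplication by a swap of two elements of S.
  have hclose : ∀ i ∈ S, ∀ j ∈ S, ∀ α ∈ G, α * Equiv.swap i j ∈ G := by
    intro i hi j hj α hα
    obtain ⟨hfix, hmap⟩ := (hGmem α).1 hα
    refine (hGmem _).2 ⟨?_, ?_⟩
    · intro k hk
      have h1 : Equiv.swap i j k = k := Equiv.swap_apply_of_ne_of_ne
        (fun h => hk (h ▸ hi)) (fun h => hk (h ▸ hj))
      simp [Equiv.Perm.mul_apply, h1, hfix k hk]
    · intro k hk
      simp only [Equiv.Perm.mul_apply]
      rcases eq_or_ne k i with rfl | hki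
      · rw [Equiv.swap_apply_left]; exact hmap j hj
      rcases eq_or_ne k j with rfl | hkj
      · rw [Equiv.swap_apply_right]; exact hmap i hi
      · rw [Equiv.swap_apply_of_ne_of_ne hki hkj]; exact hmap k hk
  -- For a pair inside S, exactly half of G puts the images in increasing order.
  have hhalf : ∀ i ∈ S, ∀ j ∈ S, i ≠ j →
      (G.filter fun α => α i < α j).card = (G.filter fun α => ¬ α i < α j).card := by
    intro i hi j hj hne
    refine Finset.card_bij (fun α _ => α * Equiv.swap i j) ?_ ?_ ?_
    · intro α hα
      simp only [Finset.mem_filter] at hα ⊢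
      refine ⟨hclose i hi j hj α hα.1, ?_⟩
      simp only [Equiv.Perm.mul_apply, Equiv.swap_apply_left, Equiv.swap_apply_right]
      exact not_lt.2 (le_of_lt hα.2)
    · intro a _ b _ h
      have := congrArg (fun π => π * Equiv.swap i j) h
      simpa [mul_assoc, Equiv.swap_mul_self] using this
    · intro β hβ
      simp only [Finset.mem_filter] at hβ
      refine ⟨β * Equiv.swap i j, ?_, ?_⟩
      · simp only [Finset.mem_filter]
        refine ⟨hclose i hi j hj β hβ.1, ?_⟩
        simp only [Equiv.Perm.mul_apply, Equiv.swap_apply_left, Equiv.swap_apply_right]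
        have hne' : β j ≠ β i := fun h => hne.symm (β.injective h)
        exact lt_of_le_of_ne (not_lt.1 hβ.2) hne'
      · simp [mul_assoc, Equiv.swap_mul_self]
  have hdbl : ∀ i ∈ S, ∀ j ∈ S, i ≠ j →
      2 * (G.filter fun α => α i < α j).card = G.card := by
    intro i hi j hj hne
    have := Finset.card_filter_add_card_filter_not
      (s := G) (p := fun α => α i < α j)
    rw [← hhalf i hi j hj hne] at this
    omega
  -- For a pair inside S and fixed α ∈ G, the discordance count over β ∈ G.
  have hpair : ∀ i ∈ S, ∀ j ∈ S, i < j → ∀ α ∈ G,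
      (∑ β ∈ G, if ¬(α i < α j ↔ β i < β j) then (1 : ℕ) else 0)
        = (G.filter fun β => β i < β j).card := by
    intro i hi j hj hij α _
    rw [← Finset.card_filter]
    by_cases h : α i < α j
    · rw [Finset.filter_congr (q := fun β => ¬ β i < β j) (fun β _ => by tauto)]
      exact (hhalf i hi j hj (ne_of_lt hij)).symm
    · exact congrArg Finset.card (Finset.filter_congr (fun β _ => by tauto))
  classical
  set Pp : Finset (Fin d × Fin d) :=
    Finset.univ.filter (fun p => p.1 < p.2 ∧ p.1 ∈ S ∧ p.2 ∈ S) with hPp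
  -- Rewrite the double sum of kendallK as a sum over pairs inside S.
  have e1 : ∑ α ∈ G, ∑ β ∈ G, kendallK α β
      = ∑ p ∈ Pp, ∑ α ∈ G, ∑ β ∈ G,
          (if ¬(α p.1 < α p.2 ↔ β p.1 < β p.2) then (1 : ℕ) else 0) := by
    simp only [kendallK, Finset.card_filter]
    rw [Finset.sum_congr rfl fun α _ => Finset.sum_comm, Finset.sum_comm]
    rw [← Finset.sum_subset (Finset.filter_subset
      (fun p : Fin d × Fin d => p.1 < p.2 ∧ p.1 ∈ S ∧ p.2 ∈ S) Finset.univ) ?_]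
    · refine Finset.sum_congr rfl fun p hp => ?_
      simp only [hPp, Finset.mem_filter] at hp
      refine Finset.sum_congr rfl fun α _ => Finset.sum_congr rfl fun β _ => ?_
      simp only [hp.2.1, true_and]
    · intro p _ hpn
      refine Finset.sum_eq_zero fun α hα => Finset.sum_eq_zero fun β hβ => ?_
      rw [if_neg]
      rintro ⟨h1, h2⟩
      have hns : ¬(p.1 ∈ S ∧ p.2 ∈ S) := fun h =>
        hpn (Finset.mem_filter.2 ⟨Finset.mem_univ p, h1, h.1, h.2⟩)
      exact h2 ⟨fun _ => hmono β hβ p.1 p.2 h1 hns,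
        fun _ => hmono α hα p.1 p.2 h1 hns⟩
  have e2 : 2 * ∑ α ∈ G, ∑ β ∈ G, kendallK α β = Pp.card * (G.card * G.card) := by
    rw [e1, Finset.mul_sum]
    rw [Finset.sum_congr rfl (fun p hp => ?_), Finset.sum_const, smul_eq_mul,
      mul_comm]
    simp only [hPp, Finset.mem_filter, Finset.mem_univ, true_and] at hp
    obtain ⟨h1, h2, h3⟩ := hp
    calc 2 * ∑ α ∈ G, ∑ β ∈ G,
          (if ¬(α p.1 < α p.2 ↔ β p.1 < β p.2) then (1 : ℕ) else 0)
        = 2 * ∑ α ∈ G, (G.filter fun β => β p.1 < β p.2).card := by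
          rw [Finset.sum_congr rfl fun α hα => hpair p.1 h2 p.2 h3 h1 α hα]
      _ = G.card * (2 * (G.filter fun β => β p.1 < β p.2).card) := by
          rw [Finset.sum_const, smul_eq_mul]; ring
      _ = G.card * G.card := by rw [hdbl p.1 h2 p.2 h3 (ne_of_lt h1)]
  -- Cardinality of S.
  have hScard : S.card = W := by
    have h1 : S.card = (Finset.Ico (d - W) d).card := by
      refine Finset.card_bij (fun i _ => (i : ℕ)) ?_ ?_ ?_
      · intro i hi
        rw [Finset.mem_Ico]
        exact ⟨(hSmem i).1 hi, i.isLt⟩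
      · intro a _ b _ h; exact Fin.val_injective h
      · intro b hb
        rw [Finset.mem_Ico] at hb
        exact ⟨⟨b, hb.2⟩, (hSmem _).2 hb.1, rfl⟩
    rw [h1, Nat.card_Ico, Nat.sub_sub_self hW]
  -- Cardinality of the pair set.
  have hPeq : Pp = S.offDiag.filter (fun p => p.1 < p.2) := by
    ext p
    simp only [hPp, Finset.mem_filter, Finset.mem_univ, true_and, Finset.mem_offDiag]
    constructor
    · rintro ⟨h1, h2, h3⟩; exact ⟨⟨h2, h3, ne_of_lt h1⟩, h1⟩
    · rintro ⟨⟨h2, h3, _⟩, h1⟩; exact ⟨h1, h2, h3⟩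
  have hPcard : 2 * Pp.card = W * (W - 1) := by
    have hlt_gt : (S.offDiag.filter (fun p => p.1 < p.2)).card
        = (S.offDiag.filter (fun p => ¬ p.1 < p.2)).card := by
      refine Finset.card_bij (fun p _ => p.swap) ?_ ?_ ?_
      · intro p hp
        simp only [Finset.mem_filter, Finset.mem_offDiag, Prod.fst_swap,
          Prod.snd_swap] at hp ⊢
        exact ⟨⟨hp.1.2.1, hp.1.1, (ne_of_lt hp.2).symm⟩, not_lt.2 (le_of_lt hp.2)⟩
      · intro a _ b _ h
        exact Prod.swap_injective h
      · intro b hb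
        simp only [Finset.mem_filter, Finset.mem_offDiag] at hb
        refine ⟨b.swap, ?_, Prod.swap_swap b⟩
        simp only [Finset.mem_filter, Finset.mem_offDiag, Prod.fst_swap, Prod.snd_swap]
        exact ⟨⟨hb.1.2.1, hb.1.1, hb.1.2.2.symm⟩,
          lt_of_le_of_ne (not_lt.1 hb.2) hb.1.2.2.symm⟩
    have hsplit := Finset.card_filter_add_card_filter_not
      (s := S.offDiag) (p := fun p : Fin d × Fin d => p.1 < p.2)
    have hoff : S.offDiag.card = W * W - W := by
      rw [Finset.offDiag_card, hScard]
    have hww : W * (W - 1) = W * W - W := Nat.mul_pred W W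
    rw [hPeq]
    omega
  -- Main natural-number identity.
  have key : 4 * ∑ α ∈ G, ∑ β ∈ G, kendallK α β
      = W * (W - 1) * (G.card * G.card) := by
    have : 4 * ∑ α ∈ G, ∑ β ∈ G, kendallK α β
        = 2 * (2 * ∑ α ∈ G, ∑ β ∈ G, kendallK α β) := by ring
    rw [this, e2, ← mul_assoc, hPcard]
  -- G is nonempty.
  have hone : (1 : Equiv.Perm (Fin d)) ∈ G := (hGmem 1).2 ⟨fun i _ => rfl, fun i hi => hi⟩
  have hg : (0 : ℝ) < (G.card : ℝ) := by
    exact_mod_cast Finset.card_pos.2 ⟨1, hone⟩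
  have hd2 : (2 : ℝ) ≤ (d : ℝ) := by exact_mod_cast hd
  have hD : ((d : ℝ) * ((d : ℝ) - 1)) ≠ 0 :=
    mul_ne_zero (by linarith) (by linarith)
  -- Cast the key identity to the reals.
  have keyR : 4 * ((∑ α ∈ G, ∑ β ∈ G, kendallK α β : ℕ) : ℝ)
      = (W : ℝ) * ((W : ℝ) - 1) * ((G.card : ℝ) * (G.card : ℝ)) := by
    rcases Nat.eq_zero_or_pos W with rfl | hWpos
    · have h0 : (4 : ℕ) * ∑ α ∈ G, ∑ β ∈ G, kendallK α β = 0 := by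
        simpa using key
      have : (∑ α ∈ G, ∑ β ∈ G, kendallK α β) = 0 := by omega
      simp [this]
    · have := key
      have hcast : ((W - 1 : ℕ) : ℝ) = (W : ℝ) - 1 := by
        rw [Nat.cast_sub hWpos, Nat.cast_one]
      calc 4 * ((∑ α ∈ G, ∑ β ∈ G, kendallK α β : ℕ) : ℝ)
          = ((4 * ∑ α ∈ G, ∑ β ∈ G, kendallK α β : ℕ) : ℝ) := by push_cast; ring
        _ = ((W * (W - 1) * (G.card * G.card) : ℕ) : ℝ) := by rw [key]
        _ = (W : ℝ) * ((W : ℝ) - 1) * ((G.card : ℝ) * (G.card : ℝ)) := by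
            push_cast [hcast]; ring
  -- Sum of kendallTau.
  have hsumtau : ∑ α ∈ G, ∑ β ∈ G, kendallTau α β
      = (G.card : ℝ) * (G.card : ℝ)
        - 4 * ((∑ α ∈ G, ∑ β ∈ G, kendallK α β : ℕ) : ℝ) / ((d : ℝ) * ((d : ℝ) - 1)) := by
    simp only [kendallTau, Finset.sum_sub_distrib, Finset.sum_const, nsmul_eq_mul,
      mul_one]
    push_cast
    congr 1
    simp [Finset.mul_sum, Finset.sum_div]
  rw [hsumtau, keyR]
  field_simp
end

section
/- Fix d ≥ 1 and positive reals σ_0, …, σ_{d−1} > 0, and for each k let f_k : (Fin d → ℝ) → ℝ be twice continuously differentiable with f_k not depending on its own coordinate (f_k(v) = f_k(w) whenever v_j = w_j for all j ≠ k). Define L(v) = −Σ_k (v_k − f_k(v))²/(2σ_k²) − Σ_k (1/2)·log(2πσ_k²). If l is an index such that no f_k depends on coordinate l (f_k(v) = f_k(w) for all k whenever v_j = w_j for all j ≠ l), then for every v one has ∂²L/∂v_l²(v) = −1/σ_l²; in particular, the function v ↦ ∂²L/∂v_l²(v) is constant. -/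
open Finset Real

/-- **Constant Hessian diagonal at a leaf (heteroscedastic ANM, Appendix D.1).**
For the heteroscedastic ANM log-density
`L(v) = −∑ₖ (vₖ − fₖ(v))²/(2σₖ²) − ∑ₖ ½ log (2πσₖ²)`, if no mechanism depends on
coordinate `l`, then `∂²L/∂v_l²(v) = −1/σ_l²` for every `v`; in particular this
sample-wise Hessian diagonal entry is constant. -/
theorem leaf_hessian_diag_constant_heteroscedastic
    {d : ℕ} (hd : 1 ≤ d) (σ : Fin d → ℝ) (hσ : ∀ k, 0 < σ k)
    (f : Fin d → (Fin d → ℝ) → ℝ)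
    (hf : ∀ k, ContDiff ℝ 2 (f k))
    (hself : ∀ k (v w : Fin d → ℝ), (∀ j, j ≠ k → v j = w j) → f k v = f k w)
    (L : (Fin d → ℝ) → ℝ)
    (hL : L = fun v => (-∑ k, (v k - f k v) ^ 2 / (2 * σ k ^ 2))
        - ∑ k, (1 / 2 : ℝ) * Real.log (2 * Real.pi * σ k ^ 2))
    (l : Fin d)
    (hleaf : ∀ k (v w : Fin d → ℝ), (∀ j, j ≠ l → v j = w j) → f k v = f k w) :
    ∀ v : Fin d → ℝ, pdv l (pdv l L) v = -1 / σ l ^ 2 := by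
  have hσl : σ l ^ 2 ≠ 0 := pow_ne_zero 2 (hσ l).ne'
  -- mechanisms don't see coordinate l
  have hfup : ∀ k (v : Fin d → ℝ) (t : ℝ), f k (Function.update v l t) = f k v := by
    intro k v t
    exact hleaf k _ _ (fun j hj => Function.update_of_ne hj _ _)
  -- first derivative
  have h1 : ∀ v : Fin d → ℝ, pdv l L v = -((v l - f l v) / σ l ^ 2) := by
    intro v
    have hfun : (fun t : ℝ => L (Function.update v l t)) =
        fun t : ℝ => -((t - f l v) ^ 2 / (2 * σ l ^ 2)) +
          (-(∑ k ∈ Finset.univ.erase l, (v k - f k v) ^ 2 / (2 * σ k ^ 2))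
            - ∑ k, (1 / 2 : ℝ) * Real.log (2 * Real.pi * σ k ^ 2)) := by
      funext t
      rw [hL]
      simp only [hfup]
      have hsum : ∑ k, (Function.update v l t k - f k v) ^ 2 / (2 * σ k ^ 2)
          = (t - f l v) ^ 2 / (2 * σ l ^ 2)
            + ∑ k ∈ Finset.univ.erase l, (v k - f k v) ^ 2 / (2 * σ k ^ 2) := by
        rw [← Finset.add_sum_erase _ _ (Finset.mem_univ l)]
        rw [Function.update_self]
        congr 1
        refine Finset.sum_congr rfl (fun k hk => ?_)
        rw [Function.update_of_ne (Finset.ne_of_mem_erase hk)]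
      rw [hsum]; ring
    have hder : HasDerivAt (fun t : ℝ => L (Function.update v l t))
        (-((v l - f l v) / σ l ^ 2)) (v l) := by
      rw [hfun]
      have h := ((((hasDerivAt_id (v l)).sub_const (f l v)).pow 2).div_const
        (2 * σ l ^ 2)).neg.add_const
        (-(∑ k ∈ Finset.univ.erase l, (v k - f k v) ^ 2 / (2 * σ k ^ 2))
          - ∑ k, (1 / 2 : ℝ) * Real.log (2 * Real.pi * σ k ^ 2))
      refine h.congr_deriv ?_
      simp only [id]
      field_simp
      ring
    rw [pdv, hder.deriv]
  -- second derivative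
  intro v
  rw [pdv]
  have hfun2 : (fun t : ℝ => pdv l L (Function.update v l t)) =
      fun t : ℝ => -((t - f l v) / σ l ^ 2) := by
    funext t
    rw [h1, Function.update_self, hfup]
  rw [hfun2]
  have hder2 : HasDerivAt (fun t : ℝ => -((t - f l v) / σ l ^ 2))
      (-1 / σ l ^ 2) (v l) := by
    have h := (((hasDerivAt_id (v l)).sub_const (f l v)).div_const (σ l ^ 2)).neg
    refine h.congr_deriv ?_
    ring
  rw [hder2.deriv]
end
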